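/- Let A₀ be a real symmetric n×n matrix (n ≥ 1) all of whose eigenvalues lie in the interval [-k, k] for a fixed real k ≥ 0 (for example, the adjacency matrix of a k-regular graph), and define recursively A_{m+1} = fromBlocks A_m 1 1 A_m. Then for every ε > 0, the proportion of eigenvalues of A_N (counted with multiplicity, out of the total 2^N · n eigenvalues) whose absolute value is at least ε · (k + N) tends to 0 as N → ∞. Equivalently, the empirical spectral distribution of the normalized matrices W_N = A_N / (k + N) converges to the Dirac δ distribution at 0. -/

import Mathlib

/-- The index type of the `N`-fold iterated graph cylinder matrix over base index `V`. -/
def CylIdx (V : Type*) : ℕ → Type _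
  | 0 => V
  | N + 1 => CylIdx V N ⊕ CylIdx V N

instance instFintypeCylIdx (V : Type*) [Fintype V] : ∀ N, Fintype (CylIdx V N)
  | 0 => ‹Fintype V›
  | N + 1 => letI := instFintypeCylIdx V N
             inferInstanceAs (Fintype (CylIdx V N ⊕ CylIdx V N))

instance instDecidableEqCylIdx (V : Type*) [DecidableEq V] : ∀ N, DecidableEq (CylIdx V N)
  | 0 => ‹DecidableEq V›
  | N + 1 => letI := instDecidableEqCylIdx V N
             inferInstanceAs (DecidableEq (CylIdx V N ⊕ CylIdx V N))

/-- The iterated graph cylinder matrices: `A_{m+1} = [[A_m, I], [I, A_m]]`. -/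
def iterCyl {V : Type*} [DecidableEq V] {R : Type*} [CommRing R] (A₀ : Matrix V V R) :
    ∀ N : ℕ, Matrix (CylIdx V N) (CylIdx V N) R
  | 0 => A₀
  | N + 1 => Matrix.fromBlocks (iterCyl A₀ N) 1 1 (iterCyl A₀ N)

/-!
Since `[[A, I], [I, A]]` has characteristic polynomial `χ(A + 1) χ(A - 1)`, the eigenvalues of
`A_N` are the sums `r + s` of an eigenvalue `r` of `A₀` and an eigenvalue `s = ±1 ± ⋯ ± 1` of the
hypercube `Q_N`. These `2 ^ N` sign sums have second moment `N · 2 ^ N`, so by Chebyshev at most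
`4 · 2 ^ N / (ε² N)` of them satisfy `|s| ≥ ε N / 2`; as `|r| ≤ k`, once `2 k ≤ ε N` only these
can give `|r + s| ≥ ε (k + N)`. Hence the proportion is at most `4 / (ε² N)`.
-/

open Polynomial

namespace Matrix

variable {m R : Type*} [Fintype m] [DecidableEq m]

theorem det_fromBlocks_eq_det_add_mul_det_sub [CommRing R] (P Q : Matrix m m R) :
    (fromBlocks P Q Q P).det = (P + Q).det * (P - Q).det := by
  have h : fromBlocks 1 1 0 1 * fromBlocks P Q Q P * fromBlocks 1 (-1) 0 1 =
      fromBlocks (P + Q) 0 Q (P - Q) := by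
    simp only [fromBlocks_multiply, Matrix.one_mul, Matrix.zero_mul, Matrix.mul_one,
      Matrix.mul_neg, Matrix.mul_zero, zero_add, add_zero]
    congr 1 <;> abel
  simpa [det_fromBlocks_zero₂₁, det_fromBlocks_zero₁₂] using congrArg det h

theorem charpoly_fromBlocks_one_one [CommRing R] (A : Matrix m m R) :
    (fromBlocks A 1 1 A).charpoly = (A + 1).charpoly * (A - 1).charpoly := by
  have hC : (1 : Matrix m m R).map C = 1 := Matrix.map_one _ C_0 C_1
  have hadd : charmatrix A - 1 = charmatrix (A + 1) := by
    rw [charmatrix, charmatrix, map_add, map_one]; abel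
  have hsub : charmatrix A + 1 = charmatrix (A - 1) := by
    rw [charmatrix, charmatrix, map_sub, map_one]; abel
  rw [charpoly, charmatrix_fromBlocks, hC, det_fromBlocks_eq_det_add_mul_det_sub, ← sub_eq_add_neg,
    sub_neg_eq_add, hadd, hsub, charpoly, charpoly]

theorem roots_charpoly_add_scalar [CommRing R] [IsDomain R] (A : Matrix m m R) (μ : R) :
    (A + scalar m μ).charpoly.roots = A.charpoly.roots.map (· + μ) := by
  rw [← sub_neg_eq_add, ← map_neg, charpoly_sub_scalar, ← one_mul X, ← C_1,
    roots_comp_C_mul_X_add_C _ _ _ isUnit_one]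
  simp [sub_eq_add_neg]

end Matrix

def signSums (R : Type*) [Ring R] : ℕ → Multiset R
  | 0 => {0}
  | N + 1 => (signSums R N).map (· + 1) + (signSums R N).map (· - 1)

theorem card_signSums (R : Type*) [Ring R] (N : ℕ) : (signSums R N).card = 2 ^ N := by
  induction N with
  | zero => rfl
  | succ N ih => simp [signSums, ih, pow_succ, mul_two]

theorem sum_sq_signSums (R : Type*) [CommRing R] (N : ℕ) :
    ((signSums R N).map (· ^ 2)).sum = (N : R) * 2 ^ N := by
  induction N with
  | zero => simp [signSums]
  | succ N ih =>
    calc ((signSums R (N + 1)).map (· ^ 2)).sum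
        = ((signSums R N).map fun s => (s + 1) ^ 2 + (s - 1) ^ 2).sum := by
          simp only [signSums, Multiset.map_add, Multiset.map_map, Multiset.sum_add,
            Multiset.sum_map_add]
          rfl
      _ = ((signSums R N).map fun s => 2 * s ^ 2 + 2).sum := by
          congr 1; exact Multiset.map_congr rfl fun s _ => by ring
      _ = ((N + 1 : ℕ) : R) * 2 ^ (N + 1) := by
          rw [Multiset.sum_map_add, Multiset.sum_map_mul_left, ih, Multiset.map_const',
            Multiset.sum_replicate, card_signSums, nsmul_eq_mul]
          push_cast
          ring

theorem charpoly_iterCyl_succ {V R : Type*} [Fintype V] [DecidableEq V] [CommRing R]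
    (A₀ : Matrix V V R) (N : ℕ) :
    (iterCyl A₀ (N + 1)).charpoly = (iterCyl A₀ N + 1).charpoly * (iterCyl A₀ N - 1).charpoly :=
  Matrix.charpoly_fromBlocks_one_one _

theorem roots_charpoly_iterCyl {V R : Type*} [Fintype V] [DecidableEq V] [CommRing R] [IsDomain R]
    (A₀ : Matrix V V R) (N : ℕ) :
    (iterCyl A₀ N).charpoly.roots =
      A₀.charpoly.roots.bind fun r => (signSums R N).map (r + ·) := by
  induction N with
  | zero =>
    show A₀.charpoly.roots = _
    simpa [signSums] using (Multiset.bind_singleton A₀.charpoly.roots id).symm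
  | succ N ih =>
    have hplus : iterCyl A₀ N + 1 = iterCyl A₀ N + Matrix.scalar _ (1 : R) := by simp
    have hminus : iterCyl A₀ N - 1 = iterCyl A₀ N + Matrix.scalar _ (-1 : R) := by
      rw [map_neg, map_one, sub_eq_add_neg]
    rw [charpoly_iterCyl_succ, roots_mul, hplus, hminus,
      Matrix.roots_charpoly_add_scalar, Matrix.roots_charpoly_add_scalar, ih,
      Multiset.map_bind, Multiset.map_bind, ← Multiset.bind_add]
    · refine Multiset.bind_congr fun r _ => ?_
      simp only [signSums, Multiset.map_add, Multiset.map_map, Function.comp_def, add_assoc,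
        sub_eq_add_neg]
    · exact mul_ne_zero (Matrix.charpoly_monic _).ne_zero (Matrix.charpoly_monic _).ne_zero

theorem Multiset.card_filter_le_abs_mul_sq_le_sum_sq {R : Type*} [CommRing R] [LinearOrder R]
    [IsStrictOrderedRing R] (S : Multiset R) {c : R} (hc : 0 ≤ c) :
    ((S.filter (c ≤ |·|)).card : R) * c ^ 2 ≤ (S.map (· ^ 2)).sum := by
  calc ((S.filter (c ≤ |·|)).card : R) * c ^ 2
        = ((S.filter (c ≤ |·|)).map fun _ => c ^ 2).sum := by
        rw [Multiset.map_const', Multiset.sum_replicate, nsmul_eq_mul]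
    _ ≤ ((S.filter (c ≤ |·|)).map (· ^ 2)).sum := by
        refine Multiset.sum_map_le_sum_map _ _ fun s hs => ?_
        have hcs : c ≤ |s| := (Multiset.mem_filter.mp hs).2
        simpa only [sq_abs] using pow_le_pow_left₀ hc hcs 2
    _ ≤ (S.map (· ^ 2)).sum := by
        conv_rhs => rw [← Multiset.filter_add_not (c ≤ |·|) S]
        rw [Multiset.map_add, Multiset.sum_add]
        exact le_add_of_nonneg_right (Multiset.sum_nonneg fun x hx => by
          obtain ⟨s, -, rfl⟩ := Multiset.mem_map.mp hx
          positivity)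

theorem card_filter_signSums_le {R : Type*} [Field R] [LinearOrder R] [IsStrictOrderedRing R]
    {c : R} (hc : 0 < c) (N : ℕ) :
    ((signSums R N).filter (c ≤ |·|)).card ≤ N * 2 ^ N / c ^ 2 := by
  rw [le_div_iff₀ (by positivity), ← sum_sq_signSums]
  exact (signSums R N).card_filter_le_abs_mul_sq_le_sum_sq hc.le

theorem card_filter_roots_iterCyl_le {V R : Type*} [Fintype V] [DecidableEq V] [CommRing R]
    [LinearOrder R] [IsStrictOrderedRing R] (A₀ : Matrix V V R) {k t c : R}
    (hbound : ∀ x ∈ A₀.charpoly.roots, |x| ≤ k) (hc : c + k ≤ t) (N : ℕ) :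
    ((iterCyl A₀ N).charpoly.roots.filter (t ≤ |·|)).card ≤
      Fintype.card V * ((signSums R N).filter (c ≤ |·|)).card := by
  have hshift : ∀ r ∈ A₀.charpoly.roots,
      (((signSums R N).map (r + ·)).filter (t ≤ |·|)).card ≤
        ((signSums R N).filter (c ≤ |·|)).card := fun r hr => by
    rw [Multiset.filter_map, Multiset.card_map]
    refine Multiset.card_le_card (Multiset.monotone_filter_right _ fun s hs => ?_)
    have htriangle := abs_add_le r s
    have hr_le := hbound r hr
    simp only [Function.comp_apply] at hs
    linarith
  have hcard : A₀.charpoly.roots.card ≤ Fintype.card V :=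
    (card_roots' _).trans (Matrix.charpoly_natDegree_eq_dim A₀).le
  rw [roots_charpoly_iterCyl, Multiset.filter_bind, Multiset.card_bind]
  calc _ ≤ (A₀.charpoly.roots.map _).card • ((signSums R N).filter (c ≤ |·|)).card :=
        Multiset.sum_le_card_nsmul _ _ fun x hx => by
          obtain ⟨r, hr, rfl⟩ := Multiset.mem_map.mp hx
          exact hshift r hr
    _ ≤ _ := by
        rw [Multiset.card_map, smul_eq_mul]
        exact Nat.mul_le_mul_right _ hcard

theorem iterCyl_normalized_spectrum_tendsto_delta_general {n : ℕ}
    (A₀ : Matrix (Fin n) (Fin n) ℝ)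
    (k : ℝ) (hk : 0 ≤ k)
    (hbound : ∀ x ∈ A₀.charpoly.roots, x ∈ Set.Icc (-k) k)
    (ε : ℝ) (hε : 0 < ε) :
    Filter.Tendsto
      (fun N : ℕ =>
        ((((iterCyl A₀ N).charpoly.roots.filter (fun x => ε * (k + N) ≤ |x|)).card : ℝ) /
          ((2 ^ N * n : ℕ) : ℝ)))
      Filter.atTop (nhds 0) := by
  refine squeeze_zero' (.of_forall fun N => by positivity) ?_
    (tendsto_const_div_atTop_nhds_zero_nat (4 / ε ^ 2))
  filter_upwards [Filter.eventually_gt_atTop 0,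
    tendsto_natCast_atTop_atTop.eventually_ge_atTop (2 * k / ε)] with N hN hNk
  have hc : ε * N / 2 + k ≤ ε * (k + N) := by
    rw [div_le_iff₀ hε] at hNk
    nlinarith
  have hcount := card_filter_roots_iterCyl_le A₀ (fun x hx => abs_le.mpr (hbound x hx)) hc N
  refine div_le_of_le_mul₀ (by positivity) (by positivity) ?_
  calc _ ≤ (n : ℝ) * ((signSums ℝ N).filter (ε * N / 2 ≤ |·|)).card := by
        simpa using (Nat.cast_le (α := ℝ)).mpr hcount
    _ ≤ n * (N * 2 ^ N / (ε * N / 2) ^ 2) := by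
        gcongr
        exact card_filter_signSums_le (by positivity) N
    _ = 4 / ε ^ 2 / N * ((2 ^ N * n : ℕ) : ℝ) := by
        push_cast
        field_simp
        ring

/-- The proportion of eigenvalues of the iterated graph cylinder matrix that are at least
`ε * (k + N)` in absolute value tends to `0`: the empirical spectral distribution of the
normalized matrices `W_N = A_N / (k + N)` converges to the Dirac δ at `0`. -/
theorem iterCyl_normalized_spectrum_tendsto_delta {n : ℕ} (hn : 1 ≤ n)
    (A₀ : Matrix (Fin n) (Fin n) ℝ) (hsym : A₀.IsSymm)
    (k : ℝ) (hk : 0 ≤ k)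
    (hbound : ∀ x ∈ A₀.charpoly.roots, x ∈ Set.Icc (-k) k)
    (ε : ℝ) (hε : 0 < ε) :
    Filter.Tendsto
      (fun N : ℕ =>
        ((((iterCyl A₀ N).charpoly.roots.filter (fun x => ε * (k + N) ≤ |x|)).card : ℝ) /
          ((2 ^ N * n : ℕ) : ℝ)))
      Filter.atTop (nhds 0) :=
  iterCyl_normalized_spectrum_tendsto_delta_general A₀ k hk hbound ε hε
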